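/- Let G be a connected graph and assume s is globally underestimating. Then for every x ∈ X = [−1,1]^N, xᵀ D f(x) ≤ 0, and xᵀ D f(x) = 0 if and only if x = c·𝟙 for some c ∈ Fix(s). -/

import Mathlib

/-!
Writing `L = D - A` for the Laplacian, `D f(x) = D (s(x) - x) - L s(x)`, so
`xᵀ D f(x) = ∑ᵢ dᵢ xᵢ (s(xᵢ) - xᵢ) - xᵀ L s(x)`. The first sum is `≤ 0` termwise because `s`
underestimates, and `xᵀ L s(x) = ½ ∑_{i ∼ j} (xᵢ - xⱼ)(s(xᵢ) - s(xⱼ)) ≥ 0` because `s` is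
monotone. Equality forces every `xᵢ` to be a fixed point of `s` (for `xᵢ = 0` because
monotonicity and underestimation pin `s 0 = 0`), so that `s(x) = x` and `xᵀ L x = 0`, which on a
connected graph means that `x` is constant.
-/

open Filter

/-- The vector field `f(x) = D⁻¹ A s(x) - x` of the nonlinear consensus dynamics:
`f(x)_i = (1/d_i) ∑_j a_ij s(x_j) - x_i`. -/
noncomputable def vecField {N : ℕ} (G : SimpleGraph (Fin N)) [DecidableRel G.Adj]
    (s : ℝ → ℝ) (x : Fin N → ℝ) : Fin N → ℝ :=
  fun i => (∑ j, G.adjMatrix ℝ i j * s (x j)) / (G.degree i : ℝ) - x i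

open Topology in
theorem MonotoneOn.map_zero_eq_zero_of_mul_sub_nonpos {s : ℝ → ℝ} {S : Set ℝ}
    (hs : MonotoneOn s S) (hS : S ∈ 𝓝 0) (hunder : ∀ y ∈ S, y * (s y - y) ≤ 0) : s 0 = 0 := by
  have h0 : (0 : ℝ) ∈ S := mem_of_mem_nhds hS
  apply le_antisymm
  · refine ge_of_tendsto
      (tendsto_id.mono_left nhdsWithin_le_nhds : Tendsto id (𝓝[>] (0 : ℝ)) (𝓝 0)) ?_
    filter_upwards [mem_nhdsWithin_of_mem_nhds hS, self_mem_nhdsWithin] with y hyS (hy : 0 < y)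
    exact (hs h0 hyS hy.le).trans (sub_nonpos.1 (nonpos_of_mul_nonpos_right (hunder y hyS) hy))
  · refine le_of_tendsto
      (tendsto_id.mono_left nhdsWithin_le_nhds : Tendsto id (𝓝[<] (0 : ℝ)) (𝓝 0)) ?_
    filter_upwards [mem_nhdsWithin_of_mem_nhds hS, self_mem_nhdsWithin] with y hyS (hy : y < 0)
    exact (sub_nonneg.1 (nonneg_of_mul_nonpos_right (hunder y hyS) hy)).trans (hs hyS h0 hy.le)

open Topology in
theorem MonotoneOn.apply_eq_self_of_mul_sub_eq_zero {s : ℝ → ℝ} {S : Set ℝ}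
    (hs : MonotoneOn s S) (hS : S ∈ 𝓝 0) (hunder : ∀ y ∈ S, y * (s y - y) ≤ 0) {y : ℝ}
    (hy : y * (s y - y) = 0) : s y = y := by
  rcases mul_eq_zero.1 hy with rfl | hfixed
  · exact hs.map_zero_eq_zero_of_mul_sub_nonpos hS hunder
  · exact sub_eq_zero.1 hfixed

theorem MonotoneOn.sub_mul_sub_nonneg {α : Type*} [Ring α] [LinearOrder α] [IsStrictOrderedRing α]
    {f : α → α} {S : Set α} (hf : MonotoneOn f S) {a b : α} (ha : a ∈ S) (hb : b ∈ S) :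
    0 ≤ (a - b) * (f a - f b) := by
  rcases le_total a b with hab | hba
  · exact mul_nonneg_of_nonpos_of_nonpos (sub_nonpos.2 hab) (sub_nonpos.2 (hf ha hb hab))
  · exact mul_nonneg (sub_nonneg.2 hba) (sub_nonneg.2 (hf hb ha hba))

namespace SimpleGraph

open Matrix Finset

variable {V : Type*} [Fintype V] [DecidableEq V] (G : SimpleGraph V) [DecidableRel G.Adj]

theorem dotProduct_lapMatrix_mulVec {R : Type*} [Field R] [CharZero R] (x y : V → R) :
    x ⬝ᵥ (G.lapMatrix R *ᵥ y) =
      (∑ i, ∑ j, if G.Adj i j then (x i - x j) * (y i - y j) else 0) / 2 := by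
  have hrow : x ⬝ᵥ (G.lapMatrix R *ᵥ y) =
      ∑ i, ∑ j, if G.Adj i j then x i * (y i - y j) else 0 := by
    simp_rw [dotProduct, lapMatrix, sub_mulVec, Pi.sub_apply, degMatrix_mulVec_apply,
      mulVec, dotProduct, adjMatrix_apply, degree_eq_sum_if_adj, mul_sub, sum_mul, mul_sum,
      ← sum_sub_distrib]
    refine sum_congr rfl fun i _ => sum_congr rfl fun j _ => ?_
    split_ifs <;> ring
  have hswap : (∑ i, ∑ j, if G.Adj i j then x i * (y i - y j) else 0) =
      ∑ i, ∑ j, if G.Adj i j then -(x j * (y i - y j)) else 0 := by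
    rw [sum_comm]
    refine sum_congr rfl fun i _ => sum_congr rfl fun j _ => ?_
    simp only [G.adj_comm j i]
    split_ifs <;> ring
  rw [eq_div_iff two_ne_zero, mul_two, hrow]
  nth_rw 2 [hswap]
  simp_rw [← sum_add_distrib]
  refine sum_congr rfl fun i _ => sum_congr rfl fun j _ => ?_
  split_ifs <;> ring

theorem dotProduct_lapMatrix_mulVec_comp_nonneg {R : Type*} [Field R] [LinearOrder R]
    [IsStrictOrderedRing R] {s : R → R} {S : Set R} (hs : MonotoneOn s S) {x : V → R}
    (hx : ∀ i, x i ∈ S) : 0 ≤ x ⬝ᵥ (G.lapMatrix R *ᵥ (s ∘ x)) := by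
  rw [dotProduct_lapMatrix_mulVec]
  refine div_nonneg (sum_nonneg fun i _ => sum_nonneg fun j _ => ?_) zero_le_two
  split_ifs
  exacts [hs.sub_mul_sub_nonneg (hx i) (hx j), le_rfl]

variable {G} in
theorem Connected.dotProduct_lapMatrix_mulVec_self_eq_zero_iff (hG : G.Connected) {x : V → ℝ} :
    x ⬝ᵥ (G.lapMatrix ℝ *ᵥ x) = 0 ↔ ∃ c, x = fun _ => c := by
  rw [← toLinearMap₂'_apply', lapMatrix_toLinearMap₂'_apply'_eq_zero_iff_forall_reachable]
  constructor
  · obtain ⟨v⟩ := hG.nonempty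
    exact fun h => ⟨x v, funext fun i => h i v (hG i v)⟩
  · rintro ⟨c, rfl⟩ _ _ _
    rfl

end SimpleGraph

open Matrix in
theorem degree_mul_vecField {N : ℕ} (G : SimpleGraph (Fin N)) [DecidableRel G.Adj]
    (s : ℝ → ℝ) (x : Fin N → ℝ) {i : Fin N} (hi : G.degree i ≠ 0) :
    G.degree i * vecField G s x i =
      G.degree i * (s (x i) - x i) - (G.lapMatrix ℝ *ᵥ (s ∘ x)) i := by
  have hadj : ∑ j, G.adjMatrix ℝ i j * s (x j) = (G.adjMatrix ℝ *ᵥ (s ∘ x)) i := rfl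
  rw [vecField, hadj, SimpleGraph.lapMatrix, sub_mulVec, Pi.sub_apply,
    SimpleGraph.degMatrix_mulVec_apply]
  field_simp
  simp only [Function.comp_apply]
  ring

open Matrix in
theorem sum_degree_mul_vecField {N : ℕ} (G : SimpleGraph (Fin N)) [DecidableRel G.Adj]
    (s : ℝ → ℝ) (x : Fin N → ℝ) (hdeg : ∀ i, G.degree i ≠ 0) :
    ∑ i, (G.degree i : ℝ) * x i * vecField G s x i =
      ∑ i, (G.degree i : ℝ) * (x i * (s (x i) - x i)) - x ⬝ᵥ (G.lapMatrix ℝ *ᵥ (s ∘ x)) := by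
  rw [dotProduct, ← Finset.sum_sub_distrib]
  refine Finset.sum_congr rfl fun i _ => ?_
  rw [mul_assoc, mul_left_comm, degree_mul_vecField G s x (hdeg i)]
  ring

theorem lyapunov_derivative_underestimation_general {N : ℕ} (hN : 2 ≤ N)
    (G : SimpleGraph (Fin N)) [DecidableRel G.Adj] (hconn : G.Connected)
    (s : ℝ → ℝ)
    (hmono : MonotoneOn s (Set.Icc (-1 : ℝ) 1))
    (hunder : ∀ y ∈ Set.Icc (-1 : ℝ) 1, y * (s y - y) ≤ 0)
    (x : Fin N → ℝ) (hx : ∀ i, x i ∈ Set.Icc (-1 : ℝ) 1) :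
    (∑ i, (G.degree i : ℝ) * x i * vecField G s x i) ≤ 0 ∧
    ((∑ i, (G.degree i : ℝ) * x i * vecField G s x i) = 0 ↔
      ∃ c ∈ Set.Icc (-1 : ℝ) 1, s c = c ∧ x = fun _ => c) := by
  have : Nontrivial (Fin N) := Fin.nontrivial_iff_two_le.mpr hN
  have hdeg i : 0 < G.degree i := hconn.preconnected.degree_pos_of_nontrivial i
  rw [sum_degree_mul_vecField G s x fun i => (hdeg i).ne']
  have hterm i : (G.degree i : ℝ) * (x i * (s (x i) - x i)) ≤ 0 :=
    mul_nonpos_of_nonneg_of_nonpos (Nat.cast_nonneg _) (hunder _ (hx i))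
  have hsum := Finset.sum_nonpos fun i (_ : i ∈ Finset.univ) => hterm i
  have hlap := G.dotProduct_lapMatrix_mulVec_comp_nonneg hmono hx
  refine ⟨by linarith, fun heq => ?_, ?_⟩
  · have hfix i : s (x i) = x i := by
      have hi := (Finset.sum_eq_zero_iff_of_nonpos fun i _ => hterm i).1 (by linarith) i
        (Finset.mem_univ i)
      exact hmono.apply_eq_self_of_mul_sub_eq_zero (Icc_mem_nhds (by norm_num) (by norm_num))
        hunder ((mul_eq_zero.1 hi).resolve_left (by exact_mod_cast (hdeg i).ne'))
    rw [show s ∘ x = x from funext hfix] at hlap heq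
    obtain ⟨c, rfl⟩ := hconn.dotProduct_lapMatrix_mulVec_self_eq_zero_iff.1 (by linarith)
    exact ⟨c, hx ⟨0, by omega⟩, hfix ⟨0, by omega⟩, rfl⟩
  · rintro ⟨c, -, hc, rfl⟩
    rw [show s ∘ (fun _ => c) = fun _ => c from funext fun _ => hc,
      hconn.dotProduct_lapMatrix_mulVec_self_eq_zero_iff.2 ⟨c, rfl⟩]
    simp [hc]

/-- **Lyapunov decrease under a globally underestimating signal.** For a connected graph
and a globally underestimating signal `s` (i.e. `y (s(y) - y) ≤ 0` on `[-1,1]`), for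
every `x ∈ [-1,1]^N` one has `xᵀ D f(x) ≤ 0`, with equality iff `x = c·𝟙` for some
fixed point `c` of `s`. -/
theorem lyapunov_derivative_underestimation {N : ℕ} (hN : 2 ≤ N)
    (G : SimpleGraph (Fin N)) [DecidableRel G.Adj] (hconn : G.Connected)
    (s : ℝ → ℝ)
    (hmono : MonotoneOn s (Set.Icc (-1 : ℝ) 1))
    (hlip : ∃ K : NNReal, LipschitzOnWith K s (Set.Icc (-1 : ℝ) 1))
    (hmaps : Set.MapsTo s (Set.Icc (-1 : ℝ) 1) (Set.Icc (-1 : ℝ) 1))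
    (hunder : ∀ y ∈ Set.Icc (-1 : ℝ) 1, y * (s y - y) ≤ 0)
    (x : Fin N → ℝ) (hx : ∀ i, x i ∈ Set.Icc (-1 : ℝ) 1) :
    (∑ i, (G.degree i : ℝ) * x i * vecField G s x i) ≤ 0 ∧
    ((∑ i, (G.degree i : ℝ) * x i * vecField G s x i) = 0 ↔
      ∃ c ∈ Set.Icc (-1 : ℝ) 1, s c = c ∧ x = fun _ => c) :=
  lyapunov_derivative_underestimation_general hN G hconn s hmono hunder x hx
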